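/- (Lemma 11.) Let τ = (I, L, m) be a type of the inequality Σ_{i=1}^q i·x(S_i) ≥ q. Then this inequality is valid for Π if and only if Σ_{i=1}^q w(S_i) ≥ σ(τ) + Σ_{j=1}^n w_j − w_0 + 1. -/
import Mathlib


open Finset

/-- The inequality Σ α_j x_j ≥ α₀ (α ∈ ℕ^n) is valid for the minimum-knapsack set
Π = {x ∈ {0,1}^n : Σ w_j x_j ≥ w₀}. -/
def knapValid (n : ℕ) (w : Fin n → ℕ) (w0 : ℕ) (α : Fin n → ℕ) (α0 : ℕ) : Prop :=
  ∀ x : Fin n → ℝ, (∀ j, x j = 0 ∨ x j = 1) →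
    (w0 : ℝ) ≤ ∑ j, (w j : ℝ) * x j → (α0 : ℝ) ≤ ∑ j, (α j : ℝ) * x j

/-- The drag δ(k) of a value k for the inequality with coefficients α:
δ(k) = {h : w_h ≥ min{w_j : α_j = k} and 0 < α_h < k} (empty when no j has α_j = k).
The condition w_h ≥ min{w_j : α_j = k} is expressed as ∃ j, α_j = k ∧ w_j ≤ w_h. -/
def dragSet (n : ℕ) (w : Fin n → ℕ) (α : Fin n → ℕ) (k : ℕ) : Finset (Fin n) :=
  Finset.univ.filter (fun h => (∃ j, α j = k ∧ w j ≤ w h) ∧ 0 < α h ∧ α h < k)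

/-- Coefficient vector of the inequality Σ_{i=1}^q i·x(S_i) ≥ q: α_j = i for
j ∈ S_i and α_j = 0 otherwise (the S_i being pairwise disjoint). -/
def coeff (n q : ℕ) (S : ℕ → Finset (Fin n)) : Fin n → ℕ :=
  fun j => ∑ i ∈ Finset.Icc 1 q, if j ∈ S i then i else 0

/-- I = {1 ≤ i ≤ q : S_i ≠ ∅}. -/
def Iset (n q : ℕ) (S : ℕ → Finset (Fin n)) : Finset ℕ :=
  (Finset.Icc 1 q).filter (fun i => (S i).Nonempty)

/-- D_i = (∪_{q ≥ k > i} δ(k)) ∩ S_i. -/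
def Dset (n q : ℕ) (w : Fin n → ℕ) (S : ℕ → Finset (Fin n)) (i : ℕ) :
    Finset (Fin n) :=
  ((Finset.Icc (i + 1) q).biUnion (fun k => dragSet n w (coeff n q S) k)) ∩ S i

/-- (I, L, m) is a type of the inequality Σ_{i=1}^q i·x(S_i) ≥ q (with I = Iset):
(t.1) L_i ⊆ S_i, (a) w_j ≤ w_h for j ∈ S_i ∖ L_i, h ∈ L_i,
(b) |L_i| = max{|D_i|, min{q−1, |S_i|}}; (t.2) m_i ∈ S_i attains min{w_j : j ∈ S_i}. -/
def IsType (n q : ℕ) (w : Fin n → ℕ) (S L : ℕ → Finset (Fin n))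
    (m : ℕ → Fin n) : Prop :=
  ∀ i ∈ Iset n q S,
    L i ⊆ S i ∧
    (∀ j ∈ S i \ L i, ∀ h ∈ L i, w j ≤ w h) ∧
    (L i).card = max (Dset n q w S i).card (min (q - 1) (S i).card) ∧
    m i ∈ S i ∧ (∀ j ∈ S i, w (m i) ≤ w j)

/-- The signature σ(τ) = max{Σ_{i∈I} w(T_i) : T_i ⊆ L_i for all i ∈ I and
Σ_{i∈I} i·|T_i| < q}.  Since the sets L_i (i ∈ I) are pairwise disjoint, a family
(T_i)_{i∈I} with T_i ⊆ L_i is encoded by the single set T = ∪_i T_i ⊆ ∪_i L_i,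
with T_i = T ∩ L_i. -/
def signature (n q : ℕ) (w : Fin n → ℕ) (I : Finset ℕ)
    (L : ℕ → Finset (Fin n)) : ℕ :=
  ((I.biUnion L).powerset.filter
      (fun T => ∑ i ∈ I, i * (T ∩ L i).card < q)).sup
    (fun T => ∑ j ∈ T, w j)


lemma knapValid_iff (n : ℕ) (w : Fin n → ℕ) (w0 : ℕ) (α : Fin n → ℕ) (α0 : ℕ) :
    knapValid n w w0 α α0 ↔
      ∀ T : Finset (Fin n), w0 ≤ ∑ j ∈ T, w j → α0 ≤ ∑ j ∈ T, α j := by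
  classical
  constructor
  · intro hv T hT
    have hsum : ∀ v : Fin n → ℕ,
        ∑ j, (v j : ℝ) * (if j ∈ T then (1:ℝ) else 0) = ((∑ j ∈ T, v j : ℕ) : ℝ) := by
      intro v
      push_cast
      simp [mul_ite, Finset.sum_ite_mem]
    have := hv (fun j => if j ∈ T then (1:ℝ) else 0)
      (by intro j; by_cases h : j ∈ T <;> simp [h])
      (by rw [hsum w]; exact_mod_cast hT)
    rw [hsum α] at this
    exact_mod_cast this
  · intro h x hx hwx
    set T := Finset.univ.filter (fun j => x j = 1) with hT
    have hsum : ∀ v : Fin n → ℕ,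
        ∑ j, (v j : ℝ) * x j = ((∑ j ∈ T, v j : ℕ) : ℝ) := by
      intro v
      rw [← Finset.sum_filter_add_sum_filter_not Finset.univ (fun j => x j = 1)
        (fun j => (v j : ℝ) * x j)]
      have h2 : ∑ j ∈ Finset.univ.filter (fun j => ¬ x j = 1),
          (v j : ℝ) * x j = 0 := by
        apply Finset.sum_eq_zero
        intro j hj
        rcases hx j with h0 | h1
        · simp [h0]
        · exact absurd h1 (Finset.mem_filter.mp hj).2
      rw [h2, add_zero]
      push_cast
      apply Finset.sum_congr rfl
      intro j hj
      rw [(Finset.mem_filter.mp hj).2, mul_one]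
    rw [hsum w] at hwx
    rw [hsum α]
    exact_mod_cast h T (by exact_mod_cast hwx)

lemma sum_coeff_eq (n q : ℕ) (S : ℕ → Finset (Fin n)) (T : Finset (Fin n)) :
    ∑ j ∈ T, coeff n q S j = ∑ i ∈ Finset.Icc 1 q, i * (T ∩ S i).card := by
  unfold coeff
  rw [Finset.sum_comm]
  refine Finset.sum_congr rfl fun i _ => ?_
  rw [Finset.sum_ite_mem, Finset.sum_const, smul_eq_mul, mul_comm]


/-- Lemma 11: if τ = (I, L, m) is a type of Σ_{i=1}^q i·x(S_i) ≥ q,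
then this inequality is valid for Π iff
Σ_{i=1}^q w(S_i) ≥ σ(τ) + Σ_{j=1}^n w_j − w₀ + 1. -/
theorem stmt_15 (n : ℕ) (hn : 0 < n) (w : Fin n → ℕ) (w0 : ℕ)
    (hw : ∀ j, w j ≤ w0) (q : ℕ) (hq : 2 ≤ q)
    (S : ℕ → Finset (Fin n))
    (hdisj : ∀ i ∈ Finset.Icc 1 q, ∀ k ∈ Finset.Icc 1 q, i ≠ k →
        Disjoint (S i) (S k))
    (L : ℕ → Finset (Fin n)) (m : ℕ → Fin n)
    (htype : IsType n q w S L m) :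
    knapValid n w w0 (coeff n q S) q ↔
      (signature n q w (Iset n q S) L : ℤ) + (∑ j, (w j : ℤ)) - (w0 : ℤ) + 1 ≤
        ∑ i ∈ Finset.Icc 1 q, ∑ j ∈ S i, (w j : ℤ) := by
  classical
  set I := Iset n q S with hIdef
  set U : Finset (Fin n) := (Finset.Icc 1 q).biUnion S with hUdef
  have hIsub : I ⊆ Finset.Icc 1 q := Finset.filter_subset _ _
  have hSempty : ∀ i ∈ Finset.Icc 1 q, i ∉ I → S i = ∅ := by
    intro i hi hni
    by_contra h
    exact hni (Finset.mem_filter.mpr ⟨hi, Finset.nonempty_iff_ne_empty.mpr h⟩)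
  have hLsub : ∀ i ∈ I, L i ⊆ S i := fun i hi => (htype i hi).1
  have hLU : I.biUnion L ⊆ U := by
    intro j hj
    obtain ⟨i, hi, hji⟩ := Finset.mem_biUnion.mp hj
    exact Finset.mem_biUnion.mpr ⟨i, hIsub hi, hLsub i hi hji⟩
  have hSU : ∀ i ∈ Finset.Icc 1 q, S i ⊆ U := by
    intro i hi j hj
    exact Finset.mem_biUnion.mpr ⟨i, hi, hj⟩
  have hpd : (↑(Finset.Icc 1 q) : Set ℕ).PairwiseDisjoint S :=
    fun i hi k hk hik => hdisj i hi k hk hik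
  have hTSL : ∀ T' : Finset (Fin n), T' ⊆ I.biUnion L → ∀ i ∈ I,
      T' ∩ S i = T' ∩ L i := by
    intro T' hT' i hi
    ext j
    simp only [Finset.mem_inter]
    constructor
    · rintro ⟨hjT, hjS⟩
      obtain ⟨i', hi', hji'⟩ := Finset.mem_biUnion.mp (hT' hjT)
      have hii : i = i' := by
        by_contra hne
        exact (Finset.disjoint_left.mp (hdisj i (hIsub hi) i' (hIsub hi') hne))
          hjS (hLsub i' hi' hji')
      exact ⟨hjT, hii ▸ hji'⟩
    · rintro ⟨hjT, hjL⟩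
      exact ⟨hjT, hLsub i hi hjL⟩
  set F := ((I.biUnion L).powerset.filter
      (fun T => ∑ i ∈ I, i * (T ∩ L i).card < q)) with hFdef
  have hsig : signature n q w I L = F.sup (fun T => ∑ j ∈ T, w j) := rfl
  have hFne : F.Nonempty := by
    refine ⟨∅, Finset.mem_filter.mpr ⟨Finset.empty_mem_powerset _, ?_⟩⟩
    simp
    omega
  have hWU : ∑ i ∈ Finset.Icc 1 q, ∑ j ∈ S i, w j = ∑ j ∈ U, w j :=
    (Finset.sum_biUnion hpd).symm
  have hsplit : ∑ j ∈ U, w j + ∑ j ∈ Uᶜ, w j = ∑ j, w j :=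
    Finset.sum_add_sum_compl U w
  have hRHS : ((signature n q w I L : ℤ) + (∑ j, (w j : ℤ)) - (w0 : ℤ) + 1 ≤
        ∑ i ∈ Finset.Icc 1 q, ∑ j ∈ S i, (w j : ℤ)) ↔
      signature n q w I L + ∑ j ∈ Uᶜ, w j < w0 := by
    have e1 : ∑ i ∈ Finset.Icc 1 q, ∑ j ∈ S i, (w j : ℤ)
        = ((∑ j ∈ U, w j : ℕ) : ℤ) := by
      rw [← hWU]; push_cast; rfl
    have e3 : (∑ j, (w j : ℤ)) = ((∑ j, w j : ℕ) : ℤ) := by push_cast; rfl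
    rw [e1, e3]
    omega
  rw [knapValid_iff, hRHS]
  constructor
  · intro hv
    obtain ⟨T0, hT0F, hT0⟩ := Finset.exists_mem_eq_sup F hFne (fun T => ∑ j ∈ T, w j)
    obtain ⟨hT0sub, hT0lt⟩ := Finset.mem_filter.mp hT0F
    rw [Finset.mem_powerset] at hT0sub
    have hdisjT0 : Disjoint T0 Uᶜ :=
      Finset.disjoint_left.mpr (fun {j} hj hjc =>
        (Finset.mem_compl.mp hjc) ((hT0sub.trans hLU) hj))
    have hα : ∑ j ∈ T0 ∪ Uᶜ, coeff n q S j < q := by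
      rw [sum_coeff_eq]
      have e : ∀ i ∈ Finset.Icc 1 q, (T0 ∪ Uᶜ) ∩ S i = T0 ∩ S i := by
        intro i hi
        ext j
        simp only [Finset.mem_inter, Finset.mem_union, Finset.mem_compl]
        constructor
        · rintro ⟨hje, hjS⟩
          refine ⟨?_, hjS⟩
          rcases hje with h | h
          · exact h
          · exact absurd (hSU i hi hjS) h
        · tauto
      calc ∑ i ∈ Finset.Icc 1 q, i * ((T0 ∪ Uᶜ) ∩ S i).card
          = ∑ i ∈ Finset.Icc 1 q, i * (T0 ∩ S i).card :=
            Finset.sum_congr rfl (fun i hi => by rw [e i hi])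
        _ = ∑ i ∈ I, i * (T0 ∩ S i).card :=
            (Finset.sum_subset hIsub (fun i hi hni => by
              rw [hSempty i hi hni]; simp)).symm
        _ = ∑ i ∈ I, i * (T0 ∩ L i).card :=
            Finset.sum_congr rfl (fun i hi => by rw [hTSL T0 hT0sub i hi])
        _ < q := hT0lt
    have hwT : ¬ (w0 ≤ ∑ j ∈ T0 ∪ Uᶜ, w j) :=
      fun h => absurd (hv _ h) (not_le.mpr hα)
    rw [Finset.sum_union hdisjT0] at hwT
    rw [hsig, hT0]
    omega
  · intro hlt T hwT
    by_contra hqT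
    push_neg at hqT
    rw [sum_coeff_eq] at hqT
    have hcard : ∀ i ∈ I, (T ∩ S i).card ≤ (L i).card := by
      intro i hi
      have h1 : i * (T ∩ S i).card < q :=
        lt_of_le_of_lt (Finset.single_le_sum
          (f := fun k => k * (T ∩ S k).card) (fun k _ => Nat.zero_le _) (hIsub hi)) hqT
      have hi1 : 1 ≤ i := (Finset.mem_Icc.mp (hIsub hi)).1
      have h0 : (T ∩ S i).card ≤ i * (T ∩ S i).card :=
        Nat.le_mul_of_pos_left _ hi1
      have h2 : (T ∩ S i).card ≤ q - 1 := by omega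
      have h3 : (T ∩ S i).card ≤ (S i).card :=
        Finset.card_le_card Finset.inter_subset_right
      have h4 := (htype i hi).2.2.1
      calc (T ∩ S i).card ≤ min (q - 1) (S i).card := le_min h2 h3
        _ ≤ max (Dset n q w S i).card (min (q - 1) (S i).card) := le_max_right _ _
        _ = (L i).card := h4.symm
    have hex : ∀ i, ∃ P : Finset (Fin n), i ∈ I →
        P ⊆ L i ∧ P.card = (T ∩ S i).card ∧
          ∑ j ∈ T ∩ S i, w j ≤ ∑ j ∈ P, w j := by
      intro i
      by_cases hi : i ∈ I
      · set X := T ∩ S i with hX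
        have hcb : (X \ L i).card ≤ (L i \ X).card := by
          have h1 := Finset.card_sdiff_add_card_inter (L i) X
          have h2 := Finset.card_sdiff_add_card_inter X (L i)
          have h3 : (L i ∩ X).card = (X ∩ L i).card := by rw [Finset.inter_comm]
          have h4 : X.card ≤ (L i).card := by rw [hX]; exact hcard i hi
          omega
        obtain ⟨A, hAsub, hAcard⟩ := Finset.exists_subset_card_eq hcb
        have hdisjCA : Disjoint (X ∩ L i) A :=
          Finset.disjoint_left.mpr (fun {j} hjC hjA =>
            (Finset.mem_sdiff.mp (hAsub hjA)).2 (Finset.mem_inter.mp hjC).1)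
        have hBweight : ∑ j ∈ X \ L i, w j ≤ ∑ j ∈ A, w j := by
          rcases Finset.eq_empty_or_nonempty A with hA0 | hAne
          · have hb0 : (X \ L i).card = 0 := by rw [← hAcard, hA0]; simp
            rw [Finset.card_eq_zero.mp hb0]
            simp
          · obtain ⟨a, haA, hamin⟩ := Finset.exists_min_image A w hAne
            have hup : ∀ b ∈ X \ L i, w b ≤ w a := by
              intro b hb
              have hbS : b ∈ S i \ L i := by
                rw [Finset.mem_sdiff] at hb ⊢
                exact ⟨(Finset.mem_inter.mp hb.1).2, hb.2⟩
              exact (htype i hi).2.1 b hbS a (Finset.mem_sdiff.mp (hAsub haA)).1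
            calc ∑ j ∈ X \ L i, w j ≤ (X \ L i).card • w a :=
                Finset.sum_le_card_nsmul _ w (w a) hup
              _ = A.card • w a := by rw [hAcard]
              _ ≤ ∑ j ∈ A, w j := Finset.card_nsmul_le_sum A w (w a) (fun x hx => hamin x hx)
        refine ⟨(X ∩ L i) ∪ A, fun _ => ⟨?_, ?_, ?_⟩⟩
        · exact Finset.union_subset Finset.inter_subset_right
            (hAsub.trans Finset.sdiff_subset)
        · rw [Finset.card_union_of_disjoint hdisjCA, hAcard]
          have h2 := Finset.card_sdiff_add_card_inter X (L i)
          omega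
        · rw [Finset.sum_union hdisjCA]
          have h2 := Finset.sum_inter_add_sum_sdiff X (L i) w
          omega
      · exact ⟨∅, fun h => absurd h hi⟩
    choose P hP using hex
    set Tstar := I.biUnion P with hTstardef
    have hPsubS : ∀ i ∈ I, P i ⊆ S i := fun i hi => ((hP i hi).1).trans (hLsub i hi)
    have hTstarsub : Tstar ⊆ I.biUnion L := by
      intro j hj
      obtain ⟨i, hi, hji⟩ := Finset.mem_biUnion.mp hj
      exact Finset.mem_biUnion.mpr ⟨i, hi, (hP i hi).1 hji⟩
    have hpdP : (↑I : Set ℕ).PairwiseDisjoint P := by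
      intro i hi k hk hik
      exact Disjoint.mono
        (Finset.le_iff_subset.mpr (hPsubS i (Finset.mem_coe.mp hi)))
        (Finset.le_iff_subset.mpr (hPsubS k (Finset.mem_coe.mp hk)))
        (hdisj i (hIsub (Finset.mem_coe.mp hi)) k (hIsub (Finset.mem_coe.mp hk)) hik)
    have hTstarL : ∀ i ∈ I, Tstar ∩ L i = P i := by
      intro i hi
      apply Finset.Subset.antisymm
      · intro j hj
        obtain ⟨hjT, hjL⟩ := Finset.mem_inter.mp hj
        obtain ⟨i', hi', hji'⟩ := Finset.mem_biUnion.mp hjT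
        have hii : i = i' := by
          by_contra hne
          exact Finset.disjoint_left.mp (hdisj i (hIsub hi) i' (hIsub hi') hne)
            (hLsub i hi hjL) (hPsubS i' hi' hji')
        exact hii ▸ hji'
      · intro j hj
        exact Finset.mem_inter.mpr ⟨Finset.mem_biUnion.mpr ⟨i, hi, hj⟩, (hP i hi).1 hj⟩
    have hTstarF : Tstar ∈ F := by
      refine Finset.mem_filter.mpr ⟨Finset.mem_powerset.mpr hTstarsub, ?_⟩
      calc ∑ i ∈ I, i * (Tstar ∩ L i).card
          = ∑ i ∈ I, i * (T ∩ S i).card :=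
            Finset.sum_congr rfl (fun i hi => by rw [hTstarL i hi, (hP i hi).2.1])
        _ ≤ ∑ i ∈ Finset.Icc 1 q, i * (T ∩ S i).card :=
            Finset.sum_le_sum_of_subset hIsub
        _ < q := hqT
    have hsle : ∑ j ∈ Tstar, w j ≤ signature n q w I L := by
      rw [hsig]; exact Finset.le_sup (f := fun T => ∑ j ∈ T, w j) hTstarF
    have hTU : T ∩ U = (Finset.Icc 1 q).biUnion (fun i => T ∩ S i) := by
      rw [hUdef]
      ext j
      constructor
      · intro hj
        obtain ⟨hjT, hjU⟩ := Finset.mem_inter.mp hj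
        obtain ⟨i, hi, hji⟩ := Finset.mem_biUnion.mp hjU
        exact Finset.mem_biUnion.mpr ⟨i, hi, Finset.mem_inter.mpr ⟨hjT, hji⟩⟩
      · intro hj
        obtain ⟨i, hi, hji⟩ := Finset.mem_biUnion.mp hj
        obtain ⟨hjT, hjS⟩ := Finset.mem_inter.mp hji
        exact Finset.mem_inter.mpr ⟨hjT, Finset.mem_biUnion.mpr ⟨i, hi, hjS⟩⟩
    have hpdTS : (↑(Finset.Icc 1 q) : Set ℕ).PairwiseDisjoint (fun i => T ∩ S i) := by
      intro i hi k hk hik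
      exact Disjoint.mono
        (Finset.le_iff_subset.mpr Finset.inter_subset_right)
        (Finset.le_iff_subset.mpr Finset.inter_subset_right)
        (hdisj i (Finset.mem_coe.mp hi) k (Finset.mem_coe.mp hk) hik)
    have hwTU : ∑ j ∈ T ∩ U, w j ≤ ∑ j ∈ Tstar, w j := by
      rw [hTU, Finset.sum_biUnion hpdTS, hTstardef, Finset.sum_biUnion hpdP]
      calc ∑ i ∈ Finset.Icc 1 q, ∑ j ∈ T ∩ S i, w j
          = ∑ i ∈ I, ∑ j ∈ T ∩ S i, w j :=
            (Finset.sum_subset hIsub (fun i hi hni => by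
              rw [hSempty i hi hni]; simp)).symm
        _ ≤ ∑ i ∈ I, ∑ j ∈ P i, w j :=
            Finset.sum_le_sum (fun i hi => (hP i hi).2.2)
    have hsplit2 : ∑ j ∈ T ∩ U, w j + ∑ j ∈ T \ U, w j = ∑ j ∈ T, w j :=
      Finset.sum_inter_add_sum_sdiff T U w
    have hTdiff : ∑ j ∈ T \ U, w j ≤ ∑ j ∈ Uᶜ, w j :=
      Finset.sum_le_sum_of_subset (fun j hj =>
        Finset.mem_compl.mpr (Finset.mem_sdiff.mp hj).2)
    omega
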